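/- arXiv:2309.08841 — 3 statements merged into one kernel-verified Lean document; each statement's English description precedes it below -/
import Mathlib

section
/- For every n ≥ 1 and every z, Σ_{k=1}^{n} (A(n,k)/n!)·z^k = Σ_{m=0}^{n-1} ((n-m)/(n·m!))·z^{n-m}·(1-z)^m. -/
open Finset Filter

/-- Sequence A000255: A(0)=A(1)=1, A(n)=n·A(n-1)+(n-1)·A(n-2). -/
def A : ℕ → ℕ
  | 0 => 1
  | 1 => 1
  | n + 2 => (n + 2) * A (n + 1) + (n + 1) * A n

/-- A(n,k) := C(n-1,k-1)·A(k-1). -/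
def Ank (n k : ℕ) : ℕ := Nat.choose (n - 1) (k - 1) * A (k - 1)

/-!
Put `n = N + 1`. After dividing by `z / n`, the two sides are the coefficients of `t ^ N` in
`e ^ t * F (z t)`, where `F t = ∑ A m t ^ m / m!`, and in `e ^ ((1 - z) t) / (1 - z t) ^ 2`.
These series agree because `F t = e ^ (-t) / (1 - t) ^ 2`: the coefficient of `t ^ m` on the right
is `∑_{p ≤ m} (m + 1 - p) (-1) ^ p / p!`, and by induction on `m` both it and `A m / m!` equal
`(m + 2) ∑_{p ≤ m + 2} (-1) ^ p / p!`.
-/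

open Nat PowerSeries

section

variable {K : Type*} [Field K] [CharZero K]

theorem succ_mul_neg_one_pow_div_factorial_succ (p : ℕ) :
    ((p : K) + 1) * ((-1) ^ (p + 1) / (p + 1)!) = -((-1) ^ p / p !) := by
  push_cast [factorial_succ]
  field_simp
  ring

theorem sum_range_mul_neg_one_pow_div_factorial (m : ℕ) :
    ∑ p ∈ range (m + 1), ((m : K) + 1 - p) * ((-1) ^ p / p !) =
      (m + 2) * ∑ p ∈ range (m + 3), (-1 : K) ^ p / p ! := by
  induction m with
  | zero => norm_num [sum_range_succ]
  | succ m ih =>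
    have hshift : ∑ p ∈ range (m + 2), ((↑(m + 1) : K) + 1 - p) * ((-1) ^ p / p !) =
        ∑ p ∈ range (m + 1), ((m : K) + 1 - p) * ((-1) ^ p / p !) +
          ∑ p ∈ range (m + 2), (-1 : K) ^ p / p ! := by
      rw [sum_range_succ _ (m + 1), sum_range_succ (fun p => (-1 : K) ^ p / p !) (m + 1),
        ← add_assoc, ← sum_add_distrib]
      push_cast
      ring_nf
    have h := succ_mul_neg_one_pow_div_factorial_succ (K := K) (m + 2)
    rw [hshift, ih, sum_range_succ _ (m + 1 + 2), sum_range_succ _ (m + 2)]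
    push_cast [add_assoc] at h ⊢
    norm_num at h ⊢
    linear_combination -h

theorem A_add_two_div_factorial (m : ℕ) :
    (A (m + 2) : K) / (m + 2)! = A (m + 1) / (m + 1)! + A m / m ! / (m + 2) := by
  have hm1 : (m : K) + 1 ≠ 0 := by exact_mod_cast succ_ne_zero m
  have hm2 : (m : K) + 2 ≠ 0 := by exact_mod_cast succ_ne_zero (m + 1)
  rw [A]
  push_cast [factorial_succ]
  rw [show (m : K) + 1 + 1 = m + 2 by ring]
  field_simp

theorem A_div_factorial (m : ℕ) :
    (A m : K) / m ! = (m + 2) * ∑ p ∈ range (m + 3), (-1 : K) ^ p / p ! := by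
  induction m using Nat.twoStepInduction with
  | zero => norm_num [A, sum_range_succ]
  | one => norm_num [A, sum_range_succ]
  | more m ih ih1 =>
    have hm : (m : K) + 2 ≠ 0 := by exact_mod_cast succ_ne_zero (m + 1)
    have h := succ_mul_neg_one_pow_div_factorial_succ (K := K) (m + 3)
    rw [A_add_two_div_factorial, ih, ih1, mul_div_cancel_left₀ _ hm,
      sum_range_succ _ (m + 2 + 2), sum_range_succ _ (m + 1 + 2)]
    push_cast [add_assoc] at h ⊢
    norm_num at h ⊢
    linear_combination -h

theorem A_egf :
    (mk fun m => (A m : K) / m !) = mk (fun j => (j : K) + 1) * rescale (-1) (exp K) := by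
  ext m
  rw [coeff_mk, coeff_mul, A_div_factorial, ← sum_range_mul_neg_one_pow_div_factorial,
    ← Nat.sum_antidiagonal_swap, Nat.sum_antidiagonal_eq_sum_range_succ_mk]
  refine sum_congr rfl fun p hp => ?_
  simp only [coeff_mk, coeff_rescale, coeff_exp, Prod.swap,
    Nat.cast_sub (mem_range_succ_iff.mp hp), map_div₀, map_one, map_natCast]
  ring

theorem sum_antidiagonal_A_div_factorial (N : ℕ) (z : K) :
    ∑ x ∈ antidiagonal N, (A x.1 : K) / x.1 ! * z ^ x.1 / x.2 ! =
      ∑ x ∈ antidiagonal N, ((x.1 : K) + 1) * z ^ x.1 * (1 - z) ^ x.2 / x.2 ! := by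
  have key : rescale z (mk fun m => (A m : K) / m !) * exp K =
      rescale z (mk fun j => (j : K) + 1) * rescale (1 - z) (exp K) := by
    have h := exp_mul_exp_eq_exp_add (A := K) (-1 * z) 1
    rw [rescale_one, RingHom.id_apply] at h
    rw [A_egf, map_mul, mul_assoc, rescale_rescale, h]
    ring_nf
  have h := congrArg (coeff N) key
  simp only [coeff_mul, coeff_rescale, coeff_mk, coeff_exp, map_div₀, map_one, map_natCast] at h
  refine (sum_congr rfl fun x _ => ?_).trans (h.trans (sum_congr rfl fun x _ => ?_)) <;> ring

theorem sum_Icc_Ank_div_factorial_mul_pow (N : ℕ) (z : K) :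
    ∑ k ∈ Icc 1 (N + 1), (Ank (N + 1) k : K) / (N + 1)! * z ^ k =
      z / (N + 1) * ∑ x ∈ antidiagonal N, (A x.1 : K) / x.1 ! * z ^ x.1 / x.2 ! := by
  rw [← Ico_add_one_right_eq_Icc, sum_Ico_eq_sum_range, add_tsub_cancel_right,
    ← Nat.sum_antidiagonal_eq_sum_range_succ
      (fun i _ => (Ank (N + 1) (1 + i) : K) / (N + 1)! * z ^ (1 + i)), mul_sum]
  refine sum_congr rfl fun x hx => ?_
  obtain ⟨i, j⟩ := x
  obtain rfl : N = i + j := (mem_antidiagonal.mp hx).symm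
  have hij : ((i + j : ℕ) : K) + 1 ≠ 0 := by exact_mod_cast succ_ne_zero (i + j)
  have hf : ((i + j)! : K) ≠ 0 := cast_ne_zero.mpr (factorial_ne_zero _)
  simp only [Ank, add_tsub_cancel_right, add_tsub_cancel_left, cast_mul, cast_add_choose,
    factorial_succ]
  push_cast at hij ⊢
  field_simp
  ring

theorem sum_range_mul_pow_mul_one_sub_pow (N : ℕ) (z : K) :
    ∑ m ∈ range (N + 1),
        ((N + 1 - m : ℕ) : K) / ((N + 1 : ℕ) * m !) * z ^ (N + 1 - m) * (1 - z) ^ m =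
      z / (N + 1) * ∑ x ∈ antidiagonal N, ((x.1 : K) + 1) * z ^ x.1 * (1 - z) ^ x.2 / x.2 ! := by
  rw [← Nat.sum_antidiagonal_eq_sum_range_succ (fun m _ =>
      ((N + 1 - m : ℕ) : K) / ((N + 1 : ℕ) * m !) * z ^ (N + 1 - m) * (1 - z) ^ m),
    ← Nat.sum_antidiagonal_swap, mul_sum]
  refine sum_congr rfl fun x hx => ?_
  obtain ⟨i, j⟩ := x
  obtain rfl : N = i + j := (mem_antidiagonal.mp hx).symm
  have hij : ((i + j : ℕ) : K) + 1 ≠ 0 := by exact_mod_cast succ_ne_zero (i + j)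
  simp only [Prod.swap, show i + j + 1 - j = i + 1 by omega]
  push_cast at hij ⊢
  field_simp
  ring

end

theorem stmt3 (n : ℕ) (hn : 1 ≤ n) (z : ℝ) :
    ∑ k ∈ Finset.Icc 1 n, (Ank n k : ℝ) / (Nat.factorial n) * z ^ k =
      ∑ m ∈ Finset.range n,
        ((n - m : ℕ) : ℝ) / (n * Nat.factorial m) * z ^ (n - m) * (1 - z) ^ m := by
  obtain ⟨N, rfl⟩ : ∃ N, n = N + 1 := ⟨n - 1, by omega⟩
  rw [sum_Icc_Ank_div_factorial_mul_pow, sum_range_mul_pow_mul_one_sub_pow,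
    sum_antidiagonal_A_div_factorial]
end

section
/- For every nonnegative integer ℓ and every n ≥ ℓ (with n ≥ 1), Σ_{k=1}^{n} (A(n,k)/n!)·(n-k)^ℓ = B_ℓ − (B_{ℓ+1} − B_ℓ)/n, where B_ℓ denotes the ℓ-th Bell number. -/
open Finset Filter

/-- Stirling numbers of the second kind. -/
def stirling2 : ℕ → ℕ → ℕ
  | 0, 0 => 1
  | 0, _ + 1 => 0
  | _ + 1, 0 => 0
  | n + 1, k + 1 => (k + 1) * stirling2 n (k + 1) + stirling2 n k

/-- Bell numbers: B_ℓ = Σ_{m=0}^{ℓ} S(ℓ,m). -/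
def bell (ℓ : ℕ) : ℕ := ∑ m ∈ Finset.range (ℓ + 1), stirling2 ℓ m

/-!
Expanding `(n - k)^ℓ` in falling factorials, `x^ℓ = Σ_m S(ℓ, m) x^{(m)}`, reduces the claim
to `Σ_k A(n, k) (n - k)^{(m)} = (n - 1)! (n - m)` for `m ≤ n`. With `N = n - 1`, the identity
`C(N, j) (N - j)^{(m)} = N^{(m)} C(N - m, j)` turns this sum into `N^{(m)}` times the binomial
transform `Σ_j C(M, j) A(j) = (M + 1)!` at `M = N - m`. Finally
`Σ_m S(ℓ, m) (n - m) = n B_ℓ - (B_{ℓ+1} - B_ℓ)`, because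
`B_{ℓ+1} = Σ_m (m + 1) S(ℓ, m)`.
-/

theorem stirling2_eq_stirlingSecond : stirling2 = Nat.stirlingSecond := by
  funext n k
  induction n generalizing k with
  | zero => cases k <;> rfl
  | succ n ih => cases k <;> simp [stirling2, Nat.stirlingSecond_succ_succ, ih]

namespace Nat

theorem self_mul_descFactorial (x m : ℕ) :
    x * x.descFactorial m = m * x.descFactorial m + x.descFactorial (m + 1) := by
  rcases le_or_gt m x with h | h
  · rw [descFactorial_succ, ← add_mul, Nat.add_sub_cancel' h]
  · simp [descFactorial_eq_zero_iff_lt.2 h]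

theorem factorial_mul_add_descFactorial (M m : ℕ) :
    M.factorial * (M + m).descFactorial m = (M + m).factorial := by
  rw [add_descFactorial_eq_ascFactorial, factorial_mul_ascFactorial]

theorem add_choose_mul_descFactorial (M m j : ℕ) :
    (M + m).choose j * (M + m - j).descFactorial m = (M + m).descFactorial m * M.choose j := by
  rcases le_or_gt j M with hj | hj
  · refine eq_of_mul_eq_mul_right (mul_pos j.factorial_pos (M - j).factorial_pos) ?_
    have hleft : (M - j).factorial * (M + m - j).descFactorial m = (M + m - j).factorial := by
      rw [← factorial_mul_descFactorial (by omega : m ≤ M + m - j)]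
      congr 2; omega
    calc (M + m).choose j * (M + m - j).descFactorial m * (j.factorial * (M - j).factorial)
        = (M + m).choose j * j.factorial * (M + m - j).factorial := by rw [← hleft]; ring
      _ = (M + m).descFactorial m * (M.choose j * j.factorial * (M - j).factorial) := by
          rw [choose_mul_factorial_mul_factorial (by omega),
            choose_mul_factorial_mul_factorial hj, ← factorial_mul_add_descFactorial, mul_comm]
      _ = (M + m).descFactorial m * M.choose j * (j.factorial * (M - j).factorial) := by ring
  · rw [choose_eq_zero_of_lt hj, mul_zero]
    rcases le_or_gt j (M + m) with hjm | hjm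
    · rw [descFactorial_eq_zero_iff_lt.2 (by omega), mul_zero]
    · rw [choose_eq_zero_of_lt hjm, zero_mul]

theorem sum_stirlingSecond_succ_mul (ℓ : ℕ) (g : ℕ → ℕ) :
    ∑ m ∈ range (ℓ + 2), stirlingSecond (ℓ + 1) m * g m =
      ∑ m ∈ range (ℓ + 1), stirlingSecond ℓ m * (m * g m + g (m + 1)) := by
  have shift : ∑ m ∈ range (ℓ + 1), (m + 1) * stirlingSecond ℓ (m + 1) * g (m + 1) =
      ∑ m ∈ range (ℓ + 1), m * stirlingSecond ℓ m * g m := by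
    have h := sum_range_succ' (fun m ↦ m * stirlingSecond ℓ m * g m) (ℓ + 1)
    rw [sum_range_succ, stirlingSecond_eq_zero_of_lt ℓ.lt_succ_self] at h
    simpa using h.symm
  calc ∑ m ∈ range (ℓ + 2), stirlingSecond (ℓ + 1) m * g m
      = ∑ m ∈ range (ℓ + 1), ((m + 1) * stirlingSecond ℓ (m + 1) * g (m + 1) +
          stirlingSecond ℓ m * g (m + 1)) := by
        rw [sum_range_succ', stirlingSecond_succ_zero, zero_mul, add_zero]
        exact sum_congr rfl fun m _ ↦ by rw [stirlingSecond_succ_succ]; ring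
    _ = ∑ m ∈ range (ℓ + 1), stirlingSecond ℓ m * (m * g m + g (m + 1)) := by
        rw [sum_add_distrib, shift, ← sum_add_distrib]
        exact sum_congr rfl fun m _ ↦ by ring

theorem pow_eq_sum_stirlingSecond_mul_descFactorial (x ℓ : ℕ) :
    x ^ ℓ = ∑ m ∈ range (ℓ + 1), stirlingSecond ℓ m * x.descFactorial m := by
  induction ℓ with
  | zero => simp
  | succ ℓ ih =>
    rw [sum_stirlingSecond_succ_mul, pow_succ, ih, sum_mul]
    refine sum_congr rfl fun m _ ↦ ?_
    rw [mul_assoc, mul_comm _ x, self_mul_descFactorial]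

end Nat

theorem bell_eq_sum_stirlingSecond (ℓ : ℕ) :
    bell ℓ = ∑ m ∈ range (ℓ + 1), Nat.stirlingSecond ℓ m := by
  rw [bell, stirling2_eq_stirlingSecond]

theorem bell_succ (ℓ : ℕ) :
    bell (ℓ + 1) = ∑ m ∈ range (ℓ + 1), Nat.stirlingSecond ℓ m * (m + 1) := by
  simpa [bell_eq_sum_stirlingSecond] using Nat.sum_stirlingSecond_succ_mul ℓ fun _ ↦ 1

theorem sum_stirlingSecond_mul_sub {R : Type*} [CommRing R] (ℓ : ℕ) (x : R) :
    ∑ m ∈ range (ℓ + 1), (Nat.stirlingSecond ℓ m : R) * (x - m) =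
      x * bell ℓ - (bell (ℓ + 1) - bell ℓ) := by
  simp only [bell_succ, bell_eq_sum_stirlingSecond, Nat.cast_sum, Nat.cast_mul, Nat.cast_add,
    Nat.cast_one, mul_sum, ← sum_sub_distrib]
  exact sum_congr rfl fun m _ ↦ by ring

def binomialTransform (X : ℕ → ℕ) (M : ℕ) : ℕ :=
  ∑ j ∈ range (M + 1), M.choose j * X j

theorem binomialTransform_add (X Y : ℕ → ℕ) (M : ℕ) :
    binomialTransform (fun j ↦ X j + Y j) M = binomialTransform X M + binomialTransform Y M := by
  simp only [binomialTransform, mul_add, sum_add_distrib]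

theorem binomialTransform_succ (X : ℕ → ℕ) (M : ℕ) :
    binomialTransform X (M + 1) =
      binomialTransform X M + binomialTransform (fun j ↦ X (j + 1)) M :=
  Finset.sum_choose_succ_mul (fun j _ ↦ X j) M

theorem binomialTransform_id_mul_succ (X : ℕ → ℕ) (M : ℕ) :
    binomialTransform (fun j ↦ j * X j) (M + 1) =
      (M + 1) * binomialTransform (fun j ↦ X (j + 1)) M := by
  rw [binomialTransform, sum_range_succ', binomialTransform, mul_sum]
  simp only [zero_mul, mul_zero, add_zero]
  refine sum_congr rfl fun j _ ↦ ?_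
  rw [← mul_assoc, ← mul_assoc, Nat.add_one_mul_choose_eq]

theorem A_succ (j : ℕ) : A (j + 1) = A j + j * (A j + A (j - 1)) := by
  cases j with
  | zero => rfl
  | succ j => simp only [A, add_tsub_cancel_right]; ring

-- By `A_succ`, the shifted transform at `M + 1` involves both transforms at `M`.
theorem binomialTransform_A_and_A_succ (M : ℕ) :
    binomialTransform A M = (M + 1).factorial ∧
      binomialTransform (fun j ↦ A (j + 1)) M = (M + 1) * (M + 1).factorial := by
  induction M with
  | zero => simp [binomialTransform, A]
  | succ M ih =>
    obtain ⟨hA, hA_succ⟩ := ih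
    have hA' : binomialTransform A (M + 1) = (M + 2).factorial := by
      rw [binomialTransform_succ, hA, hA_succ, Nat.factorial_succ (M + 1)]
      ring
    refine ⟨hA', ?_⟩
    have hsplit : (fun j ↦ A (j + 1)) = fun j ↦ A j + j * (A j + A (j - 1)) := funext A_succ
    rw [hsplit, binomialTransform_add, binomialTransform_id_mul_succ]
    simp only [add_tsub_cancel_right]
    rw [binomialTransform_add, hA', hA_succ, hA, Nat.factorial_succ (M + 1)]
    ring

theorem sum_choose_mul_A_mul_descFactorial (N m : ℕ) :
    ∑ j ∈ range (N + 1), N.choose j * A j * (N - j).descFactorial m =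
      N.factorial * (N + 1 - m) := by
  rcases le_or_gt m N with hm | hm
  · obtain ⟨M, rfl⟩ := Nat.exists_eq_add_of_le' hm
    have htrunc : ∑ j ∈ range (M + m + 1), M.choose j * A j = binomialTransform A M :=
      (sum_subset (range_subset_range.2 (by omega)) fun j _ hj ↦ by
        rw [Nat.choose_eq_zero_of_lt (by simpa using hj), zero_mul]).symm
    calc ∑ j ∈ range (M + m + 1), (M + m).choose j * A j * (M + m - j).descFactorial m
        = (M + m).descFactorial m * ∑ j ∈ range (M + m + 1), M.choose j * A j := by
          rw [mul_sum]
          refine sum_congr rfl fun j _ ↦ ?_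
          rw [mul_right_comm, Nat.add_choose_mul_descFactorial, mul_assoc]
      _ = (M + m).factorial * (M + m + 1 - m) := by
          rw [htrunc, (binomialTransform_A_and_A_succ M).1, Nat.factorial_succ,
            ← Nat.factorial_mul_add_descFactorial, Nat.add_right_comm, Nat.add_sub_cancel]
          ring
  · rw [Nat.sub_eq_zero_of_le hm, mul_zero]
    exact sum_eq_zero fun j _ ↦ by rw [Nat.descFactorial_eq_zero_iff_lt.2 (by omega), mul_zero]

theorem sum_Ank_mul (N : ℕ) (g : ℕ → ℕ) :
    ∑ k ∈ Icc 1 (N + 1), Ank (N + 1) k * g (N + 1 - k) =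
      ∑ j ∈ range (N + 1), N.choose j * A j * g (N - j) := by
  rw [← Ico_add_one_right_eq_Icc, sum_Ico_eq_sum_range]
  refine sum_congr (by simp) fun j _ ↦ ?_
  rw [Ank, add_tsub_cancel_left, add_tsub_cancel_right, show N + 1 - (1 + j) = N - j by omega]

theorem sum_Ank_mul_pow (N ℓ : ℕ) :
    ∑ k ∈ Icc 1 (N + 1), Ank (N + 1) k * (N + 1 - k) ^ ℓ =
      N.factorial * ∑ m ∈ range (ℓ + 1), Nat.stirlingSecond ℓ m * (N + 1 - m) := by
  simp_rw [Nat.pow_eq_sum_stirlingSecond_mul_descFactorial, mul_sum]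
  rw [sum_comm]
  refine sum_congr rfl fun m _ ↦ ?_
  rw [mul_left_comm, ← sum_choose_mul_A_mul_descFactorial, ← sum_Ank_mul N (·.descFactorial m),
    mul_sum]
  exact sum_congr rfl fun k _ ↦ by ring

theorem stmt5 (ℓ n : ℕ) (hn1 : 1 ≤ n) (hℓn : ℓ ≤ n) :
    ∑ k ∈ Finset.Icc 1 n, (Ank n k : ℝ) / (Nat.factorial n) * ((n - k : ℕ) : ℝ) ^ ℓ =
      (bell ℓ : ℝ) - ((bell (ℓ + 1) : ℝ) - (bell ℓ : ℝ)) / n := by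
  obtain ⟨N, rfl⟩ : ∃ N, n = N + 1 := ⟨n - 1, by omega⟩
  have hsum : ∑ k ∈ Icc 1 (N + 1), (Ank (N + 1) k : ℝ) * ((N + 1 - k : ℕ) : ℝ) ^ ℓ =
      N.factorial * ((N + 1 : ℝ) * bell ℓ - (bell (ℓ + 1) - bell ℓ)) := by
    have hnat := congrArg (Nat.cast : ℕ → ℝ) (sum_Ank_mul_pow N ℓ)
    push_cast at hnat
    rw [hnat, ← sum_stirlingSecond_mul_sub]
    congr 1
    refine sum_congr rfl fun m hm ↦ ?_
    rw [Nat.cast_sub (by simp at hm; omega)]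
    push_cast
    rfl
  simp_rw [div_mul_eq_mul_div, ← sum_div]
  rw [hsum, Nat.factorial_succ]
  push_cast
  field_simp
end

section
/- As n → ∞, S_n(n-1) := Σ_{k=1}^{n-1} A(n,k)/n! converges to 1 − 1/e. -/
open Finset Filter

/-! Writing `D n` for the number of derangements of `n` points, `A n = D n + D (n + 1)`. Splitting
permutations by their fixed points gives `∑ₖ C(n, k) D k = n!`, hence `∑ₖ C(n, k) A k = (n + 1)!`, so the
partial sum in question is `1 - A (n - 1) / n!`; and `A (n - 1) / n! → 1/e` because `D n / n! → 1/e`. -/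

open Nat Topology

theorem sum_range_choose_succ_mul (f : ℕ → ℕ) (n : ℕ) :
    ∑ i ∈ range (n + 2), (n + 1).choose i * f i =
      ∑ i ∈ range (n + 1), n.choose i * (f i + f (i + 1)) := by
  simpa [mul_add, sum_add_distrib] using sum_choose_succ_mul (fun i _ => f i) n

theorem sum_range_choose_mul_numDerangements_add_one (n : ℕ) :
    ∑ i ∈ range (n + 1), n.choose i * numDerangements (i + 1) =
      n * ∑ i ∈ range (n + 1), n.choose i * numDerangements i := by
  cases n with
  | zero => simp
  | succ n =>
    have hterm (i : ℕ) : (n + 1).choose (i + 1) * numDerangements (i + 2) =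
        (n + 1) * (n.choose i * (numDerangements i + numDerangements (i + 1))) := by
      rw [numDerangements_add_two, ← mul_assoc, ← add_one_mul_choose_eq, mul_assoc]
    rw [sum_range_succ', sum_range_choose_succ_mul]
    simp [hterm, ← mul_sum]

theorem sum_range_choose_mul_numDerangements (n : ℕ) :
    ∑ i ∈ range (n + 1), n.choose i * numDerangements i = n ! := by
  induction n with
  | zero => simp
  | succ n ih =>
    rw [sum_range_choose_succ_mul]
    simp only [mul_add, sum_add_distrib]
    rw [sum_range_choose_mul_numDerangements_add_one, ih, factorial_succ]
    ring

theorem A_eq_numDerangements_add (n : ℕ) : A n = numDerangements n + numDerangements (n + 1) := by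
  induction n using Nat.twoStepInduction with
  | zero => rfl
  | one => rfl
  | more n ih₀ ih₁ =>
    simp only [A, ih₀, ih₁, numDerangements_add_two]
    ring

theorem sum_range_choose_mul_A (n : ℕ) : ∑ i ∈ range (n + 1), n.choose i * A i = (n + 1)! := by
  simp only [A_eq_numDerangements_add]
  rw [← sum_range_choose_succ_mul, sum_range_choose_mul_numDerangements]

theorem sum_Icc_Ank_add_A (n : ℕ) : ∑ k ∈ Icc 1 n, Ank (n + 1) k + A n = (n + 1)! := by
  rw [← sum_range_choose_mul_A, sum_range_succ, choose_self, one_mul, ← Ico_add_one_right_eq_Icc,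
    sum_Ico_eq_sum_range]
  simp [Ank, add_comm 1]

theorem tendsto_A_div_factorial_succ :
    Tendsto (fun n : ℕ => (A n : ℝ) / (n + 1)!) atTop (𝓝 (Real.exp 1)⁻¹) := by
  have hD : Tendsto (fun n : ℕ => (numDerangements n : ℝ) / n !) atTop (𝓝 (Real.exp 1)⁻¹) := by
    simpa [Real.exp_neg] using numDerangements_tendsto_inv_e
  have hsmall : Tendsto (fun n : ℕ => (numDerangements n : ℝ) / n ! / (n + 1)) atTop (𝓝 0) := by
    simpa [div_eq_mul_inv] using hD.mul tendsto_one_div_add_atTop_nhds_zero_nat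
  have hsum := hsmall.add (hD.comp (tendsto_add_atTop_nat 1))
  rw [zero_add] at hsum
  refine hsum.congr fun n => ?_
  simp only [Function.comp, A_eq_numDerangements_add, factorial_succ]
  push_cast
  field_simp

theorem stmt10 :
    Filter.Tendsto
      (fun n : ℕ => ∑ k ∈ Finset.Icc 1 (n - 1), (Ank n k : ℝ) / (Nat.factorial n))
      Filter.atTop (nhds (1 - (Real.exp 1)⁻¹)) := by
  rw [← tendsto_add_atTop_iff_nat 1]
  have hsum (n : ℕ) : ∑ k ∈ Icc 1 n, (Ank (n + 1) k : ℝ) / (n + 1)! = 1 - A n / (n + 1)! := by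
    have h : (∑ k ∈ Icc 1 n, Ank (n + 1) k : ℝ) + A n = (n + 1)! := by
      exact_mod_cast sum_Icc_Ank_add_A n
    rw [← sum_div, eq_sub_iff_add_eq, ← add_div, h, div_self (by positivity)]
  simpa only [add_tsub_cancel_right, hsum] using tendsto_const_nhds.sub tendsto_A_div_factorial_succ
end
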